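/- arXiv:2212.09402 — 4 statements merged into one kernel-verified Lean document; each statement's English description precedes it below -/
import Mathlib

section
/- As a ℤ-module, the Laurent polynomial ring ℤ[q,q⁻¹] is the internal direct sum of the submodule qℤ[q] (polynomials in q with zero constant term) and the subring ℤ[q+q⁻¹] (polynomials in q+q⁻¹); i.e., every Laurent polynomial can be written uniquely as a sum of an element of qℤ[q] and an element of ℤ[q+q⁻¹]. -/
open LaurentPolynomial Finset

namespace LaurentAux

/-- The submodule `qℤ[q]`. -/
noncomputable def A : Submodule ℤ (LaurentPolynomial ℤ) :=
  Submodule.span ℤ {x : LaurentPolynomial ℤ | ∃ n : ℕ, x = T ((n : ℤ) + 1)}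

/-- The subring `ℤ[q + q⁻¹]`. -/
noncomputable def B : Subring (LaurentPolynomial ℤ) :=
  Subring.closure {(T 1 + T (-1) : LaurentPolynomial ℤ)}

lemma invert_fixed {x : LaurentPolynomial ℤ} (hx : x ∈ B) : invert x = x := by
  induction hx using Subring.closure_induction with
  | mem x hx =>
    rcases hx with rfl
    simp [add_comm]
  | zero => simp
  | one => simp
  | add x y hx hy ihx ihy => simp [map_add, ihx, ihy]
  | neg x hx ihx => simp [map_neg, ihx]
  | mul x y hx hy ihx ihy => simp [map_mul, ihx, ihy]

lemma A_coeff {x : LaurentPolynomial ℤ} (hx : x ∈ A) {k : ℤ} (hk : k ≤ 0) : x.coeff k = 0 := by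
  induction hx using Submodule.span_induction with
  | mem x hx =>
    rcases hx with ⟨n, rfl⟩
    have : ¬ ((n : ℤ) + 1 = k) := by omega
    simp [T_apply, this]
  | zero => rfl
  | add x y hx hy ihx ihy =>
    have h : (x + y).coeff k = x.coeff k + y.coeff k := rfl
    rw [h, ihx, ihy, add_zero]
  | smul a x hx ihx =>
    have h : (a • x).coeff k = a * x.coeff k := rfl
    rw [h, ihx, mul_zero]

lemma inter_eq_zero {x : LaurentPolynomial ℤ} (hA : x ∈ A) (hB : x ∈ B) : x = 0 := by
  ext k
  rcases le_or_gt k 0 with hk | hk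
  · simpa using A_coeff hA hk
  · have h1 : x.coeff k = x.coeff (-k) := by
      conv_lhs => rw [← invert_fixed hB]
      simp
    have h2 : x.coeff (-k) = 0 := A_coeff hA (by omega)
    simp [h1, h2]

lemma T_pos_mem {n : ℤ} (hn : 1 ≤ n) : (T n : LaurentPolynomial ℤ) ∈ A := by
  apply Submodule.subset_span
  exact ⟨(n - 1).toNat, by rw [show ((n-1).toNat : ℤ) + 1 = n by omega]⟩

/-- The sum of the two pieces, as a `ℤ`-submodule. -/
noncomputable def S : Submodule ℤ (LaurentPolynomial ℤ) :=
  A ⊔ AddSubgroup.toIntSubmodule B.toAddSubgroup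

lemma A_le_S {x : LaurentPolynomial ℤ} (hx : x ∈ A) : x ∈ S :=
  Submodule.mem_sup_left hx

lemma B_le_S {x : LaurentPolynomial ℤ} (hx : x ∈ B) : x ∈ S :=
  Submodule.mem_sup_right hx

lemma T_nonneg_mem_S {n : ℤ} (hn : 0 ≤ n) : (T n : LaurentPolynomial ℤ) ∈ S := by
  rcases eq_or_lt_of_le hn with rfl | h
  · exact B_le_S (by simpa using one_mem B)
  · exact A_le_S (T_pos_mem h)

lemma key_expand (M : ℕ) :
    ((T 1 + T (-1) : LaurentPolynomial ℤ)) ^ M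
      = ∑ i ∈ range (M + 1), (M.choose i : ℤ) • (T (2 * (i : ℤ) - M) : LaurentPolynomial ℤ) := by
  rw [add_pow]
  refine Finset.sum_congr rfl fun i hi => ?_
  have hiM : i ≤ M := by simpa [Nat.lt_succ_iff] using hi
  rw [T_pow, T_pow, ← T_add, zsmul_eq_mul]
  have h1 : (i : ℤ) * 1 + (M - i : ℕ) * (-1) = 2 * (i : ℤ) - M := by
    have : ((M - i : ℕ) : ℤ) = (M : ℤ) - i := by omega
    rw [this]; ring
  rw [h1, mul_comm]
  norm_cast

set_option maxHeartbeats 1000000 in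
lemma T_mem_S (n : ℤ) : (T n : LaurentPolynomial ℤ) ∈ S := by
  suffices h : ∀ m : ℕ, ∀ e : ℤ, e.natAbs ≤ m → (T e : LaurentPolynomial ℤ) ∈ S from
    h n.natAbs n le_rfl
  intro m
  induction m with
  | zero =>
    intro e he
    have : e = 0 := by omega
    subst this
    exact T_nonneg_mem_S le_rfl
  | succ m IH =>
    intro e he
    rcases le_or_gt 0 e with h | h
    · exact T_nonneg_mem_S h
    by_cases hm : e.natAbs ≤ m
    · exact IH e hm
    have hE : e = -((m : ℤ) + 1) := by omega
    subst hE
    set M := m + 1 with hM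
    have hMe : -((m : ℤ) + 1) = 2 * ((0 : ℕ) : ℤ) - M := by simp [hM]
    have key : (T (-((m : ℤ) + 1)) : LaurentPolynomial ℤ)
        = (T 1 + T (-1)) ^ M
          - ∑ i ∈ range M, (M.choose (i + 1) : ℤ) • (T (2 * ((i : ℤ) + 1) - M)) := by
      rw [key_expand M, Finset.sum_range_succ']
      simp only [Nat.choose_zero_right, Nat.cast_zero, Nat.cast_one, one_smul, mul_zero,
        zero_sub]
      push_cast
      abel
    rw [key]
    have hpow : ((T 1 + T (-1) : LaurentPolynomial ℤ)) ^ M ∈ B :=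
      pow_mem (Subring.subset_closure (Set.mem_singleton _)) M
    refine sub_mem (B_le_S hpow) (Submodule.sum_mem _ ?_)
    intro i hi
    have hiM : i < M := by simpa using hi
    refine Submodule.smul_mem _ _ ?_
    set e' := 2 * ((i : ℤ) + 1) - M with he'
    rcases le_or_gt 0 e' with h' | h'
    · exact T_nonneg_mem_S h'
    · exact IH e' (by omega)

lemma mem_S (p : LaurentPolynomial ℤ) : p ∈ S := by
  induction p using LaurentPolynomial.induction_on' with
  | add p q hp hq => exact add_mem hp hq
  | C_mul_T n a =>
    have : (C a * T n : LaurentPolynomial ℤ) = a • T n := by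
      rw [← single_eq_C_mul_T]
      rw [show (T n : LaurentPolynomial ℤ) = AddMonoidAlgebra.single n 1 from rfl]
      rw [AddMonoidAlgebra.smul_single]
      simp
    rw [this]
    exact Submodule.smul_mem _ _ (T_mem_S n)

lemma exists_decomp (p : LaurentPolynomial ℤ) :
    ∃ a ∈ A, ∃ b ∈ B, p = a + b := by
  have := mem_S p
  rw [S, Submodule.mem_sup] at this
  obtain ⟨a, ha, b, hb, hab⟩ := this
  exact ⟨a, ha, b, by exact hb, hab.symm⟩

end LaurentAux

/-- As a `ℤ`-module, the Laurent polynomial ring `ℤ[q,q⁻¹]` is the internal direct sum of the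
submodule `qℤ[q]` (the `ℤ`-span of `q, q², q³, …`) and the subring `ℤ[q+q⁻¹]` generated by
`q + q⁻¹`: every Laurent polynomial is uniquely a sum of an element of `qℤ[q]` and an element
of `ℤ[q+q⁻¹]`. -/
theorem laurent_unique_sum_qpoly_symmetric (p : LaurentPolynomial ℤ) :
    ∃! ab : LaurentPolynomial ℤ × LaurentPolynomial ℤ,
      ab.1 ∈ Submodule.span ℤ {x : LaurentPolynomial ℤ | ∃ n : ℕ, x = T ((n : ℤ) + 1)} ∧
      ab.2 ∈ Subring.closure {(T 1 + T (-1) : LaurentPolynomial ℤ)} ∧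
      p = ab.1 + ab.2 := by
  obtain ⟨a, ha, b, hb, hab⟩ := LaurentAux.exists_decomp p
  refine ⟨(a, b), ⟨ha, hb, hab⟩, ?_⟩
  rintro ⟨a', b'⟩ ⟨ha', hb', hab'⟩
  have hkey : a' - a = b - b' := by
    have : a + b = a' + b' := by rw [← hab, ← hab']
    linear_combination -this
  have hz : a' - a = 0 := by
    refine LaurentAux.inter_eq_zero (sub_mem ha' ha) ?_
    rw [hkey]
    exact sub_mem hb hb'
  have ha2 : a' = a := by rwa [sub_eq_zero] at hz
  have hb2 : b' = b := by
    have : b - b' = 0 := by rw [← hkey, hz]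
    rw [sub_eq_zero] at this
    exact this.symm
  simp [Prod.ext_iff, ha2, hb2]
end

section
/- Let Δ be an m×m lower uni-triangular matrix with entries in ℤ[q,q⁻¹]. Then there exist unique lower uni-triangular matrices N and B over ℤ[q,q⁻¹] such that Δ = N·B, every strictly-below-diagonal entry of N lies in qℤ[q], and every entry of B lies in ℤ[q+q⁻¹]. -/
open LaurentPolynomial

noncomputable section AuxLKB

local notation "R" => LaurentPolynomial ℤ

/-- `qℤ[q]` as a `ℤ`-submodule. -/
noncomputable def Pmod : Submodule ℤ R :=
  Submodule.span ℤ {x : LaurentPolynomial ℤ | ∃ n : ℕ, x = T ((n : ℤ) + 1)}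

/-- `ℤ[q+q⁻¹]` as a subring. -/
noncomputable def Sring : Subring R := Subring.closure {(T 1 + T (-1) : R)}

lemma T_mem_P {n : ℤ} (hn : 0 < n) : (T n : R) ∈ Pmod := by
  apply Submodule.subset_span
  obtain ⟨k, rfl⟩ : ∃ k : ℕ, n = (k : ℤ) + 1 := ⟨(n - 1).toNat, by omega⟩
  exact ⟨k, rfl⟩

lemma coeff_eq_zero_of_mem_P {x : R} (hx : x ∈ Pmod) {n : ℤ} (hn : n ≤ 0) : x.coeff n = 0 := by
  induction hx using Submodule.span_induction with
  | mem y hy =>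
    obtain ⟨k, rfl⟩ := hy
    rw [T_apply]
    simp only [ite_eq_right_iff, one_ne_zero]
    omega
  | zero => simp
  | add y z _ _ hy hz => rw [AddMonoidAlgebra.coeff_add, Finsupp.add_apply, hy, hz]; simp
  | smul c y _ hy => rw [AddMonoidAlgebra.coeff_smul, Finsupp.smul_apply, hy]; simp

lemma mem_P_of_coeff {x : R} (h : ∀ n : ℤ, n ≤ 0 → x.coeff n = 0) : x ∈ Pmod := by
  have hx : x = ∑ n ∈ x.coeff.support, x.coeff n • (T n : R) := by
    apply AddMonoidAlgebra.coeff_injective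
    rw [AddMonoidAlgebra.coeff_sum]
    conv_lhs => rw [← Finsupp.sum_single x.coeff]
    rw [Finsupp.sum]
    refine Finset.sum_congr rfl fun n _ => ?_
    rw [AddMonoidAlgebra.coeff_smul, T, AddMonoidAlgebra.coeff_single, Finsupp.smul_single, smul_eq_mul, mul_one]
  rw [hx]
  refine Submodule.sum_mem _ fun n hn => Submodule.smul_mem _ _ (T_mem_P ?_)
  by_contra hc
  exact (Finsupp.mem_support_iff.mp hn) (h n (by omega))

/-- the involution `q ↦ q⁻¹`. -/
noncomputable def iota : R ≃ₐ[ℤ] R := AddMonoidAlgebra.domCongr ℤ ℤ (AddEquiv.neg ℤ)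

lemma iota_apply (f : R) (n : ℤ) : (iota f).coeff n = f.coeff (-n) := by
  show ((AddMonoidAlgebra.domCongr ℤ ℤ (AddEquiv.neg ℤ)) f).coeff n = _
  rw [AddMonoidAlgebra.coeff_domCongr]
  rfl

lemma iota_T (n : ℤ) : iota (T n : R) = T (-n) := by
  show (AddMonoidAlgebra.domCongr ℤ ℤ (AddEquiv.neg ℤ)) (AddMonoidAlgebra.single n 1) = _
  rw [AddMonoidAlgebra.domCongr_single]
  rfl

lemma symm_of_mem_S {x : R} (hx : x ∈ Sring) : iota x = x := by
  induction hx using Subring.closure_induction with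
  | mem y hy => rw [Set.mem_singleton_iff.mp hy]; rw [map_add, iota_T, iota_T]; ring_nf
  | zero => simp
  | one => simp
  | add a b _ _ ha hb => rw [map_add, ha, hb]
  | neg a _ ha => rw [map_neg, ha]
  | mul a b _ _ ha hb => rw [map_mul, ha, hb]

lemma TT_mem_S : ∀ k : ℕ, (T (k : ℤ) + T (-(k : ℤ)) : R) ∈ Sring := by
  have h1 : (T 1 + T (-1) : R) ∈ Sring := Subring.subset_closure rfl
  intro k
  induction k using Nat.strong_induction_on with
  | _ k ih =>
    match k with
    | 0 => simpa using add_mem (Sring.one_mem) (Sring.one_mem)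
    | 1 => exact h1
    | (k+2) =>
      have key : (T ((k:ℤ)+2) + T (-((k:ℤ)+2)) : R)
          = (T 1 + T (-1)) * (T ((k:ℤ)+1) + T (-((k:ℤ)+1))) - (T (k:ℤ) + T (-(k:ℤ))) := by
        rw [add_mul, mul_add, mul_add, ← T_add, ← T_add, ← T_add, ← T_add]
        norm_num
        rw [show (-1 + (-1 + -(k:ℤ))) = -2 + -(k:ℤ) by ring]
        ring
      have g2 : ((k+2:ℕ) : ℤ) = (k:ℤ)+2 := by push_cast; ring
      rw [g2, key]
      have ha := ih (k+1) (by omega)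
      have hb := ih k (by omega)
      rw [show ((k+1:ℕ):ℤ) = (k:ℤ)+1 by push_cast; ring] at ha
      exact sub_mem (mul_mem h1 ha) hb

lemma eq_zero_of_mem_P_mem_S {x : R} (hP : x ∈ Pmod) (hS : x ∈ Sring) : x = 0 := by
  have hsymm := symm_of_mem_S hS
  apply AddMonoidAlgebra.coeff_injective
  apply Finsupp.ext
  intro n
  rcases le_or_gt n 0 with h | h
  · exact coeff_eq_zero_of_mem_P hP h
  · have h1 : (iota x).coeff n = x.coeff n := by rw [hsymm]
    rw [iota_apply] at h1
    rw [← h1]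
    exact coeff_eq_zero_of_mem_P hP (by omega)

/-- `ℤ[q+q⁻¹]`-component of `f`. -/
noncomputable def piS (f : R) : R :=
  f.coeff 0 • (1 : R) + ∑ n ∈ f.coeff.support.filter (fun n => n < 0), f.coeff n • ((T (-n) : R) + T n)

/-- `qℤ[q]`-component of `f`. -/
noncomputable def piP (f : R) : R := f - piS f

lemma piP_add_piS (f : R) : piP f + piS f = f := sub_add_cancel f (piS f)

lemma piS_mem (f : R) : piS f ∈ Sring := by
  refine add_mem (zsmul_mem (Sring.one_mem) _) (sum_mem fun n hn => zsmul_mem ?_ _)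
  rw [Finset.mem_filter] at hn
  have := TT_mem_S (-n).toNat
  rwa [show ((-n).toNat : ℤ) = -n by omega, neg_neg] at this

lemma piS_coeff (f : R) (n : ℤ) (hn : n ≤ 0) : (piS f).coeff n = f.coeff n := by
  rw [piS, AddMonoidAlgebra.coeff_add, Finsupp.add_apply, AddMonoidAlgebra.coeff_smul, Finsupp.smul_apply,
    AddMonoidAlgebra.coeff_sum, Finsupp.finset_sum_apply]
  have hone : (1 : R).coeff n = if n = 0 then 1 else 0 := by
    rw [← T_zero, T_apply]
    simp [eq_comm]
  have hterm : ∀ k ∈ f.coeff.support.filter (fun k => k < 0),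
      ((f.coeff k • ((T (-k) : R) + T k) : R)).coeff n = if n = k then f.coeff k else 0 := by
    intro k hk
    rw [Finset.mem_filter] at hk
    rw [AddMonoidAlgebra.coeff_smul, Finsupp.smul_apply, AddMonoidAlgebra.coeff_add, Finsupp.add_apply,
      T_apply, T_apply]
    have : ¬ (-k = n) := by omega
    simp [this, eq_comm]
  rw [Finset.sum_congr rfl hterm, Finset.sum_ite_eq, hone]
  rcases eq_or_lt_of_le hn with h0 | h0
  · simp [h0, Finset.mem_filter]
  · have hne : ¬ n = 0 := by omega
    simp only [hne, if_false, smul_zero, zero_add, Finset.mem_filter, Finsupp.mem_support_iff]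
    by_cases hs : f.coeff n = 0
    · simp [hs]
    · simp [hs, h0]

lemma piP_mem (f : R) : piP f ∈ Pmod :=
  mem_P_of_coeff fun n hn => by rw [piP, AddMonoidAlgebra.coeff_sub, Finsupp.sub_apply, piS_coeff f n hn, sub_self]

/-- The recursively defined pair of matrices `(N, B)`. -/
noncomputable def NBfun (m : ℕ) (Δ : Matrix (Fin m) (Fin m) R) (i j : Fin m) : R × R :=
  if h : (j:ℕ) < (i:ℕ) then
    let r := Δ i j - ∑ k ∈ (Finset.Ioo j i).attach,
      (NBfun m Δ i k.1).1 * (NBfun m Δ k.1 j).2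
    (piP r, piS r)
  else if i = j then (1, 1) else (0, 0)
termination_by (i:ℕ) - (j:ℕ)
decreasing_by
  · have := Finset.mem_Ioo.mp k.2
    have h1 : (j:ℕ) < (k.1:ℕ) := this.1
    have h2 : ((k.1:Fin m):ℕ) < (i:ℕ) := this.2
    omega
  · have := Finset.mem_Ioo.mp k.2
    have h1 : (j:ℕ) < (k.1:ℕ) := this.1
    have h2 : ((k.1:Fin m):ℕ) < (i:ℕ) := this.2
    omega

lemma NBfun_diag (m : ℕ) (Δ : Matrix (Fin m) (Fin m) R) (i : Fin m) :
    NBfun m Δ i i = (1, 1) := by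
  rw [NBfun]; simp

lemma NBfun_upper (m : ℕ) (Δ : Matrix (Fin m) (Fin m) R) {i j : Fin m} (hij : i < j) :
    NBfun m Δ i j = (0, 0) := by
  rw [NBfun]
  have h1 : ¬ (j:ℕ) < (i:ℕ) := by
    have := Fin.lt_iff_val_lt_val.mp hij; omega
  have h2 : ¬ i = j := Fin.ne_of_lt hij
  simp [h1, h2]

lemma NBfun_lower (m : ℕ) (Δ : Matrix (Fin m) (Fin m) R) {i j : Fin m} (hij : j < i) :
    NBfun m Δ i j =
      (piP (Δ i j - ∑ k ∈ Finset.Ioo j i, (NBfun m Δ i k).1 * (NBfun m Δ k j).2),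
       piS (Δ i j - ∑ k ∈ Finset.Ioo j i, (NBfun m Δ i k).1 * (NBfun m Δ k j).2)) := by
  rw [NBfun]
  have h1 : (j:ℕ) < (i:ℕ) := Fin.lt_iff_val_lt_val.mp hij
  rw [dif_pos h1]
  rw [← Finset.sum_attach (Finset.Ioo j i) (fun k => (NBfun m Δ i k).1 * (NBfun m Δ k j).2)]

/-- Key sum identity for products of lower unitriangular matrices. -/
lemma mul_apply_of_tri {m : ℕ} {N B : Matrix (Fin m) (Fin m) R}
    (hN1 : ∀ i, N i i = 1) (hN0 : ∀ i j, i < j → N i j = 0)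
    (hB1 : ∀ i, B i i = 1) (hB0 : ∀ i j, i < j → B i j = 0)
    {i j : Fin m} (hij : j < i) :
    (N * B) i j = N i j + B i j + ∑ k ∈ Finset.Ioo j i, N i k * B k j := by
  rw [Matrix.mul_apply]
  rw [← Finset.sum_subset (Finset.subset_univ (Finset.Icc j i))
    (fun k _ hk => by
      rw [Finset.mem_Icc, not_and_or] at hk
      rcases hk with hk | hk
      · rw [hB0 k j (lt_of_not_ge hk), mul_zero]
      · rw [hN0 i k (lt_of_not_ge hk), zero_mul])]
  have e1 : Finset.Icc j i = insert j (insert i (Finset.Ioo j i)) := by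
    rw [Finset.Ioo_insert_right hij, Finset.Ioc_insert_left (le_of_lt hij)]
  rw [e1, Finset.sum_insert, Finset.sum_insert]
  · rw [hB1, hN1, mul_one, one_mul]; ring
  · simp [Finset.mem_Ioo]
  · simp [Finset.mem_Ioo, Fin.ne_of_lt hij]

end AuxLKB

/-- Every lower uni-triangular matrix `Δ` over `ℤ[q,q⁻¹]` factorises uniquely as `Δ = N * B`
with `N`, `B` lower uni-triangular, the strictly-below-diagonal entries of `N` in `qℤ[q]`
(the `ℤ`-span of `q, q², …`) and all entries of `B` in the subring `ℤ[q+q⁻¹]`. -/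
theorem unitriangular_matrix_unique_factorisation (m : ℕ)
    (Δ : Matrix (Fin m) (Fin m) (LaurentPolynomial ℤ))
    (hdiag : ∀ i, Δ i i = 1) (hupper : ∀ i j, i < j → Δ i j = 0) :
    ∃! NB : Matrix (Fin m) (Fin m) (LaurentPolynomial ℤ) ×
        Matrix (Fin m) (Fin m) (LaurentPolynomial ℤ),
      (∀ i, NB.1 i i = 1) ∧ (∀ i j, i < j → NB.1 i j = 0) ∧
      (∀ i, NB.2 i i = 1) ∧ (∀ i j, i < j → NB.2 i j = 0) ∧
      (∀ i j, j < i →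
        NB.1 i j ∈ Submodule.span ℤ {x : LaurentPolynomial ℤ | ∃ n : ℕ, x = T ((n : ℤ) + 1)}) ∧
      (∀ i j, NB.2 i j ∈ Subring.closure {(T 1 + T (-1) : LaurentPolynomial ℤ)}) ∧
      Δ = NB.1 * NB.2 := by
  classical
  set N : Matrix (Fin m) (Fin m) (LaurentPolynomial ℤ) :=
    Matrix.of fun i j => (NBfun m Δ i j).1 with hN
  set B : Matrix (Fin m) (Fin m) (LaurentPolynomial ℤ) :=
    Matrix.of fun i j => (NBfun m Δ i j).2 with hB
  have hN1 : ∀ i, N i i = 1 := fun i => congrArg Prod.fst (NBfun_diag m Δ i)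
  have hN0 : ∀ i j, i < j → N i j = 0 := fun i j h => congrArg Prod.fst (NBfun_upper m Δ h)
  have hB1 : ∀ i, B i i = 1 := fun i => congrArg Prod.snd (NBfun_diag m Δ i)
  have hB0 : ∀ i j, i < j → B i j = 0 := fun i j h => congrArg Prod.snd (NBfun_upper m Δ h)
  have hNmem : ∀ i j : Fin m, j < i → N i j ∈ Pmod := by
    intro i j h
    have := congrArg Prod.fst (NBfun_lower m Δ h)
    rw [show N i j = (NBfun m Δ i j).1 from rfl, this]
    exact piP_mem _
  have hBmem : ∀ i j : Fin m, B i j ∈ Sring := by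
    intro i j
    rcases lt_trichotomy i j with h | h | h
    · rw [hB0 i j h]; exact Sring.zero_mem
    · rw [h, hB1 j]; exact Sring.one_mem
    · have := congrArg Prod.snd (NBfun_lower m Δ h)
      rw [show B i j = (NBfun m Δ i j).2 from rfl, this]
      exact piS_mem _
  have hfact : Δ = N * B := by
    refine Matrix.ext fun i j => ?_
    rcases lt_trichotomy i j with h | h | h
    · rw [hupper i j h, Matrix.mul_apply]
      refine (Finset.sum_eq_zero fun k _ => ?_).symm
      rcases lt_or_ge k j with hk | hk
      · rw [hB0 k j hk, mul_zero]
      · rw [hN0 i k (lt_of_lt_of_le h hk), zero_mul]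
    · subst h
      rw [hdiag i, Matrix.mul_apply]
      rw [Finset.sum_eq_single i
        (fun k _ hk => by
          rcases lt_or_gt_of_ne hk with hki | hki
          · rw [hB0 k i hki, mul_zero]
          · rw [hN0 i k hki, zero_mul])
        (fun h => absurd (Finset.mem_univ i) h)]
      rw [hN1, hB1, one_mul]
    · rw [mul_apply_of_tri hN1 hN0 hB1 hB0 h]
      have h1 := congrArg Prod.fst (NBfun_lower m Δ h)
      have h2 := congrArg Prod.snd (NBfun_lower m Δ h)
      rw [show N i j = (NBfun m Δ i j).1 from rfl, h1,
        show B i j = (NBfun m Δ i j).2 from rfl, h2]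
      rw [show ∀ r : LaurentPolynomial ℤ, piP r + piS r = r from piP_add_piS]
      simp only [hN, hB, Matrix.of_apply]
      ring
  refine ⟨(N, B), ⟨hN1, hN0, hB1, hB0, hNmem, hBmem, hfact⟩, ?_⟩
  rintro ⟨N', B'⟩ ⟨h1, h2, h3, h4, h5, h6, h7⟩
  have key : ∀ d : ℕ, ∀ i j : Fin m, (i:ℕ) - (j:ℕ) = d → N' i j = N i j ∧ B' i j = B i j := by
    intro d
    induction d using Nat.strong_induction_on with
    | _ d ih =>
      intro i j hd
      rcases lt_trichotomy i j with h | h | h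
      · exact ⟨(h2 i j h).trans (hN0 i j h).symm, (h4 i j h).trans (hB0 i j h).symm⟩
      · subst h
        exact ⟨(h1 i).trans (hN1 i).symm, (h3 i).trans (hB1 i).symm⟩
      · have hji : (j:ℕ) < (i:ℕ) := Fin.lt_iff_val_lt_val.mp h
        have hsum : ∑ k ∈ Finset.Ioo j i, N' i k * B' k j
            = ∑ k ∈ Finset.Ioo j i, N i k * B k j := by
          refine Finset.sum_congr rfl fun k hk => ?_
          obtain ⟨hk1, hk2⟩ := Finset.mem_Ioo.mp hk
          have hk1' : (j:ℕ) < (k:ℕ) := Fin.lt_iff_val_lt_val.mp hk1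
          have hk2' : (k:ℕ) < (i:ℕ) := Fin.lt_iff_val_lt_val.mp hk2
          have e1 := ih ((i:ℕ) - (k:ℕ)) (by omega) i k rfl
          have e2 := ih ((k:ℕ) - (j:ℕ)) (by omega) k j rfl
          rw [e1.1, e2.2]
        have hm1 := mul_apply_of_tri h1 h2 h3 h4 h
        have hm2 := mul_apply_of_tri hN1 hN0 hB1 hB0 h
        have hd1 : Δ i j = N' i j + B' i j + ∑ k ∈ Finset.Ioo j i, N' i k * B' k j := by
          rw [← hm1, ← h7]
        have hd2 : Δ i j = N i j + B i j + ∑ k ∈ Finset.Ioo j i, N i k * B k j := by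
          rw [← hm2, ← hfact]
        have hsame : N' i j + B' i j = N i j + B i j := by
          have := hd1.symm.trans hd2
          rw [hsum] at this
          exact add_right_cancel this
        have hx1 : N' i j - N i j ∈ Pmod := sub_mem (h5 i j h) (hNmem i j h)
        have hx2 : N' i j - N i j = B i j - B' i j := by linear_combination hsame
        have hx3 : N' i j - N i j ∈ Sring := by
          rw [hx2]; exact sub_mem (hBmem i j) (h6 i j)
        have hz := eq_zero_of_mem_P_mem_S hx1 hx3
        constructor
        · linear_combination hz
        · rw [hx2] at hz; linear_combination -hz
  refine Prod.ext ?_ ?_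
  · exact Matrix.ext fun i j => (key ((i:ℕ) - (j:ℕ)) i j rfl).1
  · exact Matrix.ext fun i j => (key ((i:ℕ) - (j:ℕ)) i j rfl).2
end

section
/- In the oriented Temperley–Lieb algebra TL_{(W,P)}(q) for (W,P) = (A_3, A_2), the product E_1·E_3 equals 0. Consequently the algebra homomorphism TL_{A_3}(q) → TL_{(A_3,A_2)}(q) sending U_i to E_i is not injective, since U_1U_3 ≠ 0 in TL_{A_3}(q). -/
noncomputable section

open LaurentPolynomial

/-- The base ring `ℤ[q,q⁻¹]`. -/
abbrev LP := LaurentPolynomial ℤ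

/-! ### The generalised Temperley–Lieb algebra `TL_{A₃}(q)` -/

/-- The free algebra on the generators `U₁, U₂, U₃` of `TL_{A₃}(q)`. -/
abbrev TLAFree := FreeAlgebra LP (Fin 3)

/-- The generator `U_{i+1}` in the free algebra. -/
def Ufree (i : Fin 3) : TLAFree := FreeAlgebra.ι LP i

/-- Defining relations of the generalised Temperley–Lieb algebra of type `A₃`:
`Uᵢ² = (q+q⁻¹)Uᵢ`, `U₁U₃ = U₃U₁` (the commuting pair `m = 2`), and
`UᵢUⱼUᵢ = Uᵢ` for adjacent `i, j` (`m = 3`). -/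
inductive TLARel : TLAFree → TLAFree → Prop
  | quadratic (i : Fin 3) :
      TLARel (Ufree i * Ufree i) (algebraMap LP TLAFree (T 1 + T (-1)) * Ufree i)
  | comm : TLARel (Ufree 0 * Ufree 2) (Ufree 2 * Ufree 0)
  | braid (i j : Fin 3) (h : (i : ℕ) + 1 = (j : ℕ) ∨ (j : ℕ) + 1 = (i : ℕ)) :
      TLARel (Ufree i * Ufree j * Ufree i) (Ufree i)

/-- The generalised Temperley–Lieb algebra `TL_{A₃}(q)`. -/
abbrev TLA := RingQuot TLARel

/-- The generator `U_{i+1}` of `TL_{A₃}(q)`. -/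
def U (i : Fin 3) : TLA := RingQuot.mkAlgHom LP TLARel (Ufree i)

/-! ### The oriented Temperley–Lieb algebra `TL_{(A₃,A₂)}(q)`

The minimal coset representatives `^PW = {1, s₃, s₃s₂, s₃s₂s₁}` are indexed by `Fin 4`
(in increasing length order, so `ℓ(λ_j) = j`). -/

/-- The partial action of the simple reflection `s_{i+1}` on the four cosets:
`λ ↦ λ s_{i+1}` when `λ s_{i+1} ∈ ^PW` is a distinct minimal coset representative,
and `none` otherwise.  Concretely `s₁` swaps `λ₂ ↔ λ₃`, `s₂` swaps `λ₁ ↔ λ₂` and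
`s₃` swaps `λ₀ ↔ λ₁`. -/
def cosetAct (i : Fin 3) (l : Fin 4) : Option (Fin 4) :=
  if (l : ℕ) = 2 - (i : ℕ) then some ⟨3 - (i : ℕ), by omega⟩
  else if (l : ℕ) = 3 - (i : ℕ) then some ⟨2 - (i : ℕ), by omega⟩
  else none

/-- The free algebra on the idempotents `1_λ` (`λ ∈ ^PW`) and generators `E₁, E₂, E₃`. -/
abbrev TLWPFree := FreeAlgebra LP (Fin 4 ⊕ Fin 3)

/-- The idempotent `1_λ` in the free algebra. -/
def Pfree (l : Fin 4) : TLWPFree := FreeAlgebra.ι LP (Sum.inl l)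

/-- The generator `E_{i+1}` in the free algebra. -/
def Efree (i : Fin 3) : TLWPFree := FreeAlgebra.ι LP (Sum.inr i)

/-- Defining relations of the oriented Temperley–Lieb algebra `TL_{(A₃,A₂)}(q)`
(Definition 3.2 of the paper): orthogonal idempotents summing to `1`;
`1_λ E_i 1_μ = 0` unless `λs_i ∈ ^PW` and `μ ∈ {λ, λs_i}`;
`1_μ E_i 1_λ E_i 1_ν = q^{ℓ(λs_i)-ℓ(λ)} 1_μ E_i 1_ν`; the commutation relation
`E₁E₃ = E₃E₁`; and `E_iE_jE_i = E_i` for adjacent `i, j`. -/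
inductive TLWPRel : TLWPFree → TLWPFree → Prop
  | idem (l m : Fin 4) : TLWPRel (Pfree l * Pfree m) (if l = m then Pfree l else 0)
  | idemSum : TLWPRel (∑ l : Fin 4, Pfree l) 1
  | supp (i : Fin 3) (l m : Fin 4)
      (h : ∀ l' : Fin 4, cosetAct i l = some l' → m ≠ l ∧ m ≠ l') :
      TLWPRel (Pfree l * Efree i * Pfree m) 0
  | quadratic (i : Fin 3) (l l' : Fin 4) (h : cosetAct i l = some l')
      (m k : Fin 4) (hm : m = l ∨ m = l') (hk : k = l ∨ k = l') :
      TLWPRel (Pfree m * Efree i * Pfree l * Efree i * Pfree k)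
        (algebraMap LP TLWPFree (T (((l' : ℕ) : ℤ) - ((l : ℕ) : ℤ))) *
          (Pfree m * Efree i * Pfree k))
  | comm : TLWPRel (Efree 0 * Efree 2) (Efree 2 * Efree 0)
  | braid (i j : Fin 3) (h : (i : ℕ) + 1 = (j : ℕ) ∨ (j : ℕ) + 1 = (i : ℕ)) :
      TLWPRel (Efree i * Efree j * Efree i) (Efree i)

/-- The oriented Temperley–Lieb algebra `TL_{(A₃,A₂)}(q)`. -/
abbrev TLWP := RingQuot TLWPRel

/-- The idempotent `1_λ` of `TL_{(A₃,A₂)}(q)`. -/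
def idem (l : Fin 4) : TLWP := RingQuot.mkAlgHom LP TLWPRel (Pfree l)

/-- The generator `E_{i+1}` of `TL_{(A₃,A₂)}(q)`. -/
def Egen (i : Fin 3) : TLWP := RingQuot.mkAlgHom LP TLWPRel (Efree i)

/-! ### Auxiliary lemmas -/

lemma aux_idem_mul (l m : Fin 4) :
    idem l * idem m = if l = m then idem l else 0 := by
  have h := RingQuot.mkAlgHom_rel LP (TLWPRel.idem l m)
  simp only [map_mul, apply_ite (RingQuot.mkAlgHom LP TLWPRel), map_zero] at h
  simpa [idem] using h

lemma aux_sum_idem : (∑ l : Fin 4, idem l) = 1 := by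
  have h := RingQuot.mkAlgHom_rel LP TLWPRel.idemSum
  simpa [idem, map_sum] using h

lemma aux_supp (i : Fin 3) (l m : Fin 4)
    (h : ∀ l' : Fin 4, cosetAct i l = some l' → m ≠ l ∧ m ≠ l') :
    idem l * Egen i * idem m = 0 := by
  have h2 := RingQuot.mkAlgHom_rel LP (TLWPRel.supp i l m h)
  simpa [idem, Egen] using h2

lemma aux_E1_idem (m : Fin 4) (hm : m = 0 ∨ m = 1) : Egen 0 * idem m = 0 := by
  have key : ∀ a : Fin 4, idem a * Egen 0 * idem m = 0 := by
    intro a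
    apply aux_supp
    rcases hm with rfl | rfl <;> revert a <;> decide
  calc Egen 0 * idem m = (∑ a : Fin 4, idem a) * (Egen 0 * idem m) := by
        rw [aux_sum_idem, one_mul]
    _ = ∑ a : Fin 4, idem a * Egen 0 * idem m := by
        rw [Finset.sum_mul]; simp [mul_assoc]
    _ = 0 := by simp [key]

lemma aux_idem_E3 (l : Fin 4) (hl : l = 2 ∨ l = 3) : idem l * Egen 2 = 0 := by
  have key : ∀ m : Fin 4, idem l * Egen 2 * idem m = 0 := by
    intro m
    apply aux_supp
    rcases hl with rfl | rfl <;> revert m <;> decide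
  calc idem l * Egen 2 = (idem l * Egen 2) * (∑ m : Fin 4, idem m) := by
        rw [aux_sum_idem, mul_one]
    _ = ∑ m : Fin 4, idem l * Egen 2 * idem m := by rw [Finset.mul_sum]
    _ = 0 := by simp [key]

lemma aux_E1E3 : Egen 0 * Egen 2 = 0 := by
  calc Egen 0 * Egen 2 = Egen 0 * (∑ m : Fin 4, idem m) * Egen 2 := by
        rw [aux_sum_idem, mul_one]
    _ = ∑ m : Fin 4, Egen 0 * idem m * Egen 2 := by
        rw [Finset.mul_sum, Finset.sum_mul]
    _ = 0 := by
        rw [Fin.sum_univ_four]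
        rw [aux_E1_idem 0 (Or.inl rfl), aux_E1_idem 1 (Or.inr rfl)]
        rw [mul_assoc, mul_assoc, aux_idem_E3 2 (Or.inl rfl),
          aux_idem_E3 3 (Or.inr rfl)]
        simp

/-! ### A matrix representation of `TL_{A₃}(q)` -/

/-- `q + q⁻¹`. -/
def dl : LP := T 1 + T (-1)

/-- A two-dimensional representation of `TL_{A₃}(q)`. -/
def Mrep (i : Fin 3) : Matrix (Fin 2) (Fin 2) LP :=
  if i = 1 then !![0, 0; 1, dl] else !![dl, 1; 0, 0]

lemma Mrep_rel : ∀ ⦃a b : TLAFree⦄, TLARel a b →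
    FreeAlgebra.lift LP Mrep a = FreeAlgebra.lift LP Mrep b := by
  intro a b h
  induction h with
  | quadratic i =>
      simp only [map_mul, AlgHom.commutes, Ufree, FreeAlgebra.lift_ι_apply]
      fin_cases i <;>
        · simp [Mrep, Matrix.mul_fin_two, Algebra.algebraMap_eq_smul_one, dl]
          ext i
          fin_cases i <;> simp [Matrix.smul_apply]
  | comm =>
      simp [Ufree, Mrep]
  | braid i j h =>
      simp only [map_mul, Ufree, FreeAlgebra.lift_ι_apply]
      fin_cases i <;> fin_cases j <;> simp_all <;>
        · simp [Mrep, Matrix.mul_fin_two]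
          ext i
          fin_cases i <;> simp

lemma aux_dl_ne : dl ≠ 0 := by
  intro h
  simp only [dl, LaurentPolynomial.T] at h
  have h1 := congrArg (fun f : AddMonoidAlgebra ℤ ℤ => f.coeff 1) h
  simp only [AddMonoidAlgebra.coeff_add, AddMonoidAlgebra.coeff_single,
    AddMonoidAlgebra.coeff_zero] at h1
  rw [Finsupp.add_apply, Finsupp.single_apply, Finsupp.single_apply,
    Finsupp.zero_apply] at h1
  norm_num at h1

lemma aux_U1U3_ne : U 0 * U 2 ≠ 0 := by
  intro h
  let φ : TLA →ₐ[LP] Matrix (Fin 2) (Fin 2) LP :=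
    RingQuot.liftAlgHom LP ⟨FreeAlgebra.lift LP Mrep, Mrep_rel⟩
  have hφ : ∀ i, φ (U i) = Mrep i := by
    intro i
    simp [φ, U, RingQuot.liftAlgHom_mkAlgHom_apply, Ufree]
  have h2 : Mrep 0 * Mrep 2 = 0 := by
    rw [← hφ, ← hφ, ← map_mul, h, map_zero]
  have h3 : dl = 0 := by
    have := congrArg (fun M : Matrix (Fin 2) (Fin 2) LP => M 0 1) h2
    simpa [Mrep, Matrix.mul_apply, Fin.sum_univ_two] using this
  exact aux_dl_ne h3

/-- In `TL_{(A₃,A₂)}(q)` one has `E₁ · E₃ = 0`; consequently the algebra homomorphism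
`TL_{A₃}(q) → TL_{(A₃,A₂)}(q)` sending `Uᵢ` to `Eᵢ` is not injective, since
`U₁U₃ ≠ 0` in `TL_{A₃}(q)`. -/
theorem TLWP_E1_mul_E3_eq_zero_and_hom_not_injective :
    Egen 0 * Egen 2 = 0 ∧ U 0 * U 2 ≠ 0 ∧
      ∀ φ : TLA →ₐ[LP] TLWP, (∀ i, φ (U i) = Egen i) → ¬ Function.Injective φ := by
  refine ⟨aux_E1E3, aux_U1U3_ne, fun φ hφ hinj => ?_⟩
  have h1 : φ (U 0 * U 2) = 0 := by rw [map_mul, hφ, hφ, aux_E1E3]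
  exact aux_U1U3_ne (hinj (by rw [h1, map_zero]))

end
end

section
/- A permutation w ∈ S_n is fully commutative if and only if it is 321-avoiding. Here fully commutative means: no reduced word for w (as a product of adjacent transpositions s_i = (i,i+1)) contains a factor s_i s_{i+1} s_i or s_{i+1} s_i s_{i+1}; equivalently, any two reduced words for w are related by interchanges of adjacent commuting generators. -/
/-- The product of the word `l` in the adjacent transpositions `sᵢ = (i, i+1)` of
`S_{n+1}`. -/
def wordProdA (n : ℕ) (l : List (Fin n)) : Equiv.Perm (Fin (n + 1)) :=
  (l.map fun i => Equiv.swap i.castSucc i.succ).prod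

/-- `l` is a reduced word for `w`: it has product `w` and minimal length among all such
words. -/
def IsReducedWordA (n : ℕ) (w : Equiv.Perm (Fin (n + 1))) (l : List (Fin n)) : Prop :=
  wordProdA n l = w ∧ ∀ l' : List (Fin n), wordProdA n l' = w → l.length ≤ l'.length

/-- `l` contains a consecutive factor `sₐ s_b sₐ` with `a, b` adjacent, i.e. a factor
`sᵢ sᵢ₊₁ sᵢ` or `sᵢ₊₁ sᵢ sᵢ₊₁`. -/
def HasBraidFactor (n : ℕ) (l : List (Fin n)) : Prop :=
  ∃ (l₁ l₂ : List (Fin n)) (a b : Fin n),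
    ((b : ℕ) = (a : ℕ) + 1 ∨ (a : ℕ) = (b : ℕ) + 1) ∧ l = l₁ ++ [a, b, a] ++ l₂

namespace FC321

variable {n : ℕ}

def S (i : Fin n) : Equiv.Perm (Fin (n + 1)) := Equiv.swap i.castSucc i.succ

def InvSet (w : Equiv.Perm (Fin (n + 1))) : Finset (Fin (n + 1) × Fin (n + 1)) :=
  Finset.univ.filter fun p => p.1 < p.2 ∧ w p.2 < w p.1

def invCount (w : Equiv.Perm (Fin (n + 1))) : ℕ := (InvSet w).card

lemma sigma_lt (a : Fin n) {p q : Fin (n + 1)} (hpq : p < q)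
    (h : ¬(p = a.castSucc ∧ q = a.succ)) :
    Equiv.swap a.castSucc a.succ p < Equiv.swap a.castSucc a.succ q := by
  simp only [Equiv.swap_apply_def]
  split_ifs <;>
    simp only [Fin.lt_def, Fin.ext_iff, Fin.coe_castSucc, Fin.val_succ, not_and] at * <;> omega

lemma mem_invSet {w : Equiv.Perm (Fin (n + 1))} {p : Fin (n + 1) × Fin (n + 1)} :
    p ∈ InvSet w ↔ p.1 < p.2 ∧ w p.2 < w p.1 := by
  simp [InvSet]

lemma erase_card (w : Equiv.Perm (Fin (n + 1))) (a : Fin n) :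
    ((InvSet (w * S a)).erase (a.castSucc, a.succ)).card
      = ((InvSet w).erase (a.castSucc, a.succ)).card := by
  apply Finset.card_bij'
    (i := fun p _ => (Equiv.swap a.castSucc a.succ p.1, Equiv.swap a.castSucc a.succ p.2))
    (j := fun p _ => (Equiv.swap a.castSucc a.succ p.1, Equiv.swap a.castSucc a.succ p.2))
  · rintro ⟨p, q⟩ hm
    rw [Finset.mem_erase, mem_invSet] at hm ⊢
    obtain ⟨hne, hpq, hw⟩ := hm
    refine ⟨?_, sigma_lt a hpq (by simpa [Prod.ext_iff] using hne), ?_⟩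
    · simp only [Ne, Prod.ext_iff, not_and]
      intro h1 h2
      have hp : p = a.succ := by
        have := congrArg (Equiv.swap a.castSucc a.succ) h1
        simpa [Equiv.swap_apply_self] using this
      have hq : q = a.castSucc := by
        have := congrArg (Equiv.swap a.castSucc a.succ) h2
        simpa [Equiv.swap_apply_self] using this
      subst hp hq
      exact absurd hpq (by simp [Fin.lt_def])
    · simpa [S, Equiv.Perm.mul_apply] using hw
  · rintro ⟨p, q⟩ hm
    rw [Finset.mem_erase, mem_invSet] at hm ⊢
    obtain ⟨hne, hpq, hw⟩ := hm
    refine ⟨?_, sigma_lt a hpq (by simpa [Prod.ext_iff] using hne), ?_⟩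
    · simp only [Ne, Prod.ext_iff, not_and]
      intro h1 h2
      have hp : p = a.succ := by
        have := congrArg (Equiv.swap a.castSucc a.succ) h1
        simpa [Equiv.swap_apply_self] using this
      have hq : q = a.castSucc := by
        have := congrArg (Equiv.swap a.castSucc a.succ) h2
        simpa [Equiv.swap_apply_self] using this
      subst hp hq
      exact absurd hpq (by simp [Fin.lt_def])
    · simp only [S, Equiv.Perm.mul_apply, Equiv.swap_apply_self]
      exact hw
  · rintro ⟨p, q⟩ _; simp [Equiv.swap_apply_self]
  · rintro ⟨p, q⟩ _; simp [Equiv.swap_apply_self]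

lemma invCount_mul_of_ascent {w : Equiv.Perm (Fin (n + 1))} {a : Fin n}
    (h : w a.castSucc < w a.succ) : invCount (w * S a) = invCount w + 1 := by
  have hABmem : (a.castSucc, a.succ) ∈ InvSet (w * S a) := by
    rw [mem_invSet]
    refine ⟨by simp [Fin.lt_def], ?_⟩
    simpa [S, Equiv.Perm.mul_apply] using h
  have hABnot : (a.castSucc, a.succ) ∉ InvSet w := by
    rw [mem_invSet]
    rintro ⟨-, h2⟩
    exact absurd h (not_lt.2 h2.le)
  have h1 : invCount (w * S a) = ((InvSet (w * S a)).erase (a.castSucc, a.succ)).card + 1 := by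
    rw [invCount, ← Finset.card_erase_add_one hABmem]
  have h2 : invCount w = ((InvSet w).erase (a.castSucc, a.succ)).card := by
    rw [invCount, Finset.erase_eq_of_notMem hABnot]
  rw [h1, h2, erase_card]

lemma invCount_mul_of_descent {w : Equiv.Perm (Fin (n + 1))} {a : Fin n}
    (h : w a.succ < w a.castSucc) : invCount (w * S a) + 1 = invCount w := by
  have key : invCount ((w * S a) * S a) = invCount (w * S a) + 1 := by
    apply invCount_mul_of_ascent
    simpa [S, Equiv.Perm.mul_apply] using h
  have : (w * S a) * S a = w := by
    rw [mul_assoc]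
    simp [S, Equiv.swap_mul_self]
  rw [this] at key
  exact key.symm


lemma wp_append (l₁ l₂ : List (Fin n)) :
    wordProdA n (l₁ ++ l₂) = wordProdA n l₁ * wordProdA n l₂ := by
  simp [wordProdA, List.map_append, List.prod_append]

lemma wp_singleton (i : Fin n) : wordProdA n [i] = S i := by
  simp [wordProdA, S]

lemma wp_cons (i : Fin n) (l : List (Fin n)) :
    wordProdA n (i :: l) = S i * wordProdA n l := by
  simp [wordProdA, S]

lemma ne_apply (w : Equiv.Perm (Fin (n + 1))) (a : Fin n) :
    w a.castSucc ≠ w a.succ := by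
  intro h
  have := w.injective h
  simp [Fin.ext_iff] at this

/-- two-sided bound -/
lemma bounds (v : List (Fin n)) (x : Equiv.Perm (Fin (n + 1))) :
    invCount (x * wordProdA n v) ≤ invCount x + v.length ∧
      invCount x ≤ invCount (x * wordProdA n v) + v.length := by
  induction v generalizing x with
  | nil => simp [wordProdA]
  | cons i v ih =>
    have hrw : x * wordProdA n (i :: v) = (x * S i) * wordProdA n v := by
      rw [wp_cons, mul_assoc]
    rcases (ne_apply x i).lt_or_gt with h | h
    · have hs := invCount_mul_of_ascent h
      have := ih (x * S i)
      rw [hrw]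
      constructor
      · calc invCount ((x * S i) * wordProdA n v) ≤ invCount (x * S i) + v.length := this.1
          _ = invCount x + 1 + v.length := by rw [hs]
          _ = invCount x + (i :: v).length := by simp; omega
      · calc invCount x ≤ invCount (x * S i) := by omega
          _ ≤ invCount ((x * S i) * wordProdA n v) + v.length := this.2
          _ ≤ _ + (i :: v).length := by simp only [List.length_cons]; omega
    · have hs := invCount_mul_of_descent h
      have := ih (x * S i)
      rw [hrw]
      constructor
      · calc invCount ((x * S i) * wordProdA n v) ≤ invCount (x * S i) + v.length := this.1
          _ ≤ invCount x + (i :: v).length := by simp; omega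
      · calc invCount x = invCount (x * S i) + 1 := hs.symm
          _ ≤ (invCount ((x * S i) * wordProdA n v) + v.length) + 1 := by
              have := this.2; omega
          _ = _ + (i :: v).length := by simp; omega

lemma invCount_one : invCount (1 : Equiv.Perm (Fin (n + 1))) = 0 := by
  rw [invCount, Finset.card_eq_zero]
  ext p
  simp only [mem_invSet, Finset.notMem_empty, iff_false, not_and]
  intro h
  simpa using h.not_gt

lemma invCount_le_length (l : List (Fin n)) : invCount (wordProdA n l) ≤ l.length := by
  have := (bounds l 1).1
  simpa [invCount_one] using this

lemma eq_one_of_invCount_zero {w : Equiv.Perm (Fin (n + 1))} (h : invCount w = 0) : w = 1 := by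
  have hmono : StrictMono w := by
    intro p q hpq
    by_contra hc
    have : w q < w p := by
      rcases lt_or_eq_of_le (not_lt.1 hc) with h' | h'
      · exact h'
      · exact absurd (w.injective h') (by intro e; subst e; exact lt_irrefl _ hpq)
    have : (p, q) ∈ InvSet w := mem_invSet.2 ⟨hpq, this⟩
    rw [invCount, Finset.card_eq_zero] at h
    simp [h] at this
  have inst : WellFoundedLT (Fin (n+1)) := inferInstance
  have h1 : ∀ x, x ≤ w x := fun x => @StrictMono.le_apply (Fin (n+1)) _ inst _ hmono x
  have hmono' : StrictMono (w⁻¹ : Equiv.Perm (Fin (n+1))) := by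
    intro p q hpq
    rcases lt_trichotomy ((w⁻¹ : Equiv.Perm (Fin (n+1))) p) ((w⁻¹ : Equiv.Perm (Fin (n+1))) q)
      with h' | h' | h'
    · exact h'
    · exact absurd (w⁻¹.injective h') hpq.ne
    · have := hmono h'
      simp only [← Equiv.Perm.mul_apply, mul_inv_cancel, Equiv.Perm.one_apply] at this
      exact absurd hpq (not_lt.2 this.le)
  have h2 : ∀ x, w x ≤ x := fun x => by
    have := @StrictMono.le_apply (Fin (n+1)) _ inst _ hmono' (w x)
    simpa using this
  ext x
  exact congrArg Fin.val (le_antisymm (h2 x) (h1 x))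

/-- existence of a word of length invCount w -/
lemma exists_word (w : Equiv.Perm (Fin (n + 1))) :
    ∃ l : List (Fin n), wordProdA n l = w ∧ l.length = invCount w := by
  generalize hN : invCount w = N
  induction N generalizing w with
  | zero =>
    exact ⟨[], by simp [wordProdA, eq_one_of_invCount_zero hN], by simp⟩
  | succ N ih =>
    -- w ≠ 1, so w has a descent
    have hdes : ∃ i : Fin n, w i.succ < w i.castSucc := by
      by_contra hc
      push_neg at hc
      have hmono : StrictMono w := by
        rw [Fin.strictMono_iff_lt_succ]
        intro i
        rcases (ne_apply w i).lt_or_gt with h | h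
        · exact h
        · exact absurd h (not_lt.2 (hc i))
      have : invCount w = 0 := by
        rw [invCount, Finset.card_eq_zero]
        ext p
        simp only [mem_invSet, Finset.notMem_empty, iff_false, not_and]
        intro h
        exact not_lt.2 (hmono h).le
      omega
    obtain ⟨i, hi⟩ := hdes
    have hstep := invCount_mul_of_descent hi
    have : invCount (w * S i) = N := by omega
    obtain ⟨l, hl, hlen⟩ := ih (w * S i) this
    refine ⟨l ++ [i], ?_, by simp [hlen, this]⟩
    rw [wp_append, hl, wp_singleton, mul_assoc]
    simp [S, Equiv.swap_mul_self]

lemma reduced_iff {w : Equiv.Perm (Fin (n + 1))} {l : List (Fin n)} :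
    IsReducedWordA n w l ↔ wordProdA n l = w ∧ l.length = invCount w := by
  constructor
  · rintro ⟨hp, hmin⟩
    obtain ⟨l', hl', hlen'⟩ := exists_word (n := n) w
    have h1 : l.length ≤ l'.length := hmin l' hl'
    have h2 : invCount w ≤ l.length := by rw [← hp]; exact invCount_le_length l
    exact ⟨hp, by omega⟩
  · rintro ⟨hp, hlen⟩
    refine ⟨hp, fun l' hl' => ?_⟩
    have := invCount_le_length l'
    rw [hl'] at this
    omega


def Has321 (w : Equiv.Perm (Fin (n + 1))) : Prop :=
  ∃ p q r : Fin (n + 1), p < q ∧ q < r ∧ w q < w p ∧ w r < w q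

lemma pattern_mul {w : Equiv.Perm (Fin (n + 1))} {a : Fin n} {p q r : Fin (n + 1)}
    (hpq : p < q) (hqr : q < r) (h1 : w q < w p) (h2 : w r < w q)
    (hA : ¬(p = a.castSucc ∧ q = a.succ)) (hB : ¬(q = a.castSucc ∧ r = a.succ)) :
    Has321 (w * S a) := by
  refine ⟨Equiv.swap a.castSucc a.succ p, Equiv.swap a.castSucc a.succ q,
    Equiv.swap a.castSucc a.succ r, sigma_lt a hpq hA, sigma_lt a hqr hB, ?_, ?_⟩
  · simpa [S, Equiv.Perm.mul_apply, Equiv.swap_apply_self] using h1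
  · simpa [S, Equiv.Perm.mul_apply, Equiv.swap_apply_self] using h2

lemma has321_mul_of_ascent {w : Equiv.Perm (Fin (n + 1))} {a : Fin n}
    (hasc : w a.castSucc < w a.succ) (h : Has321 w) : Has321 (w * S a) := by
  obtain ⟨p, q, r, hpq, hqr, h1, h2⟩ := h
  refine pattern_mul hpq hqr h1 h2 ?_ ?_
  · rintro ⟨rfl, rfl⟩; exact absurd hasc (not_lt.2 h1.le)
  · rintro ⟨rfl, rfl⟩; exact absurd hasc (not_lt.2 h2.le)

lemma exists_descent_between (w : Equiv.Perm (Fin (n + 1))) :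
    ∀ (d : ℕ) (q r : Fin (n + 1)), (r : ℕ) - (q : ℕ) ≤ d → q < r → w r < w q →
      ∃ i : Fin n, q ≤ i.castSucc ∧ i.succ ≤ r ∧ w i.succ < w i.castSucc := by
  intro d
  induction d with
  | zero =>
    intro q r hd hlt _
    rw [Fin.lt_def] at hlt
    omega
  | succ d ih =>
    intro q r hd hlt hw
    have hq : (q : ℕ) < n := by
      have h1 := hlt
      rw [Fin.lt_def] at h1
      have := r.isLt
      omega
    set i : Fin n := ⟨q, hq⟩ with hi
    have hcs : i.castSucc = q := by
      apply Fin.ext; simp [hi]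
    rcases (ne_apply w i).lt_or_gt with hca | hca
    · -- ascent at i : w i.castSucc < w i.succ, recurse from i.succ
      rw [hcs] at hca
      have hne : i.succ ≠ r := by
        intro hh
        rw [hh] at hca
        exact absurd hca (not_lt.2 hw.le)
      have hle : i.succ ≤ r := by
        rw [Fin.le_def, Fin.val_succ]
        rw [Fin.lt_def] at hlt
        simp [hi]
        omega
      have hlt' : i.succ < r := lt_of_le_of_ne hle hne
      have hw' : w r < w i.succ := hw.trans hca
      have harith : (r : ℕ) - ((i.succ : Fin (n+1)) : ℕ) ≤ d := by
        simp only [Fin.val_succ, hi]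
        omega
      obtain ⟨j, hj1, hj2, hj3⟩ := ih i.succ r harith hlt' hw'
      exact ⟨j, le_trans (by rw [← hcs]; exact (Fin.castSucc_lt_succ (i := i)).le) hj1, hj2, hj3⟩
    · refine ⟨i, le_of_eq hcs.symm, ?_, hca⟩
      rw [Fin.le_def, Fin.val_succ]
      rw [Fin.lt_def] at hlt
      simp [hi]
      omega

lemma reduced_split {w : Equiv.Perm (Fin (n + 1))} {l u v : List (Fin n)}
    (hr : IsReducedWordA n w l) (he : l = u ++ v) :
    invCount (wordProdA n u) = u.length ∧ invCount w = invCount (wordProdA n u) + v.length := by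
  obtain ⟨hp, hlen⟩ := reduced_iff.1 hr
  have hw : w = wordProdA n u * wordProdA n v := by rw [← hp, he, wp_append]
  have hb := (bounds v (wordProdA n u)).1
  rw [← hw] at hb
  have h2 : invCount (wordProdA n u) ≤ u.length := invCount_le_length u
  have h3 : l.length = u.length + v.length := by rw [he]; simp
  constructor <;> omega

lemma ascent_at {w : Equiv.Perm (Fin (n + 1))} {l u v : List (Fin n)} {i : Fin n}
    (hr : IsReducedWordA n w l) (he : l = u ++ i :: v) :
    (wordProdA n u) i.castSucc < (wordProdA n u) i.succ := by
  have he2 : l = (u ++ [i]) ++ v := by rw [he]; simp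
  have h1 := (reduced_split hr he).1
  have h2 := (reduced_split hr he2).1
  rw [wp_append, wp_singleton] at h2
  rcases (ne_apply (wordProdA n u) i).lt_or_gt with h | h
  · exact h
  · have := invCount_mul_of_descent h
    simp only [List.length_append, List.length_singleton] at h2
    omega

lemma propagate : ∀ (v : List (Fin n)) (y : Equiv.Perm (Fin (n + 1))),
    invCount (y * wordProdA n v) = invCount y + v.length → Has321 y →
      Has321 (y * wordProdA n v) := by
  intro v
  induction v with
  | nil => intro y _ h; simpa [wordProdA] using h
  | cons i v ih =>
    intro y hinv h
    have hrw : y * wordProdA n (i :: v) = (y * S i) * wordProdA n v := by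
      rw [wp_cons, mul_assoc]
    rw [hrw] at hinv ⊢
    rcases (ne_apply y i).lt_or_gt with hca | hca
    · have hstep := invCount_mul_of_ascent hca
      exact ih (y * S i) (by rw [hstep]; simp at hinv ⊢; omega)
        (has321_mul_of_ascent hca h)
    · exfalso
      have hstep := invCount_mul_of_descent hca
      have hb := (bounds v (y * S i)).1
      simp only [List.length_cons] at hinv
      omega


lemma SS (j : Fin n) : S j * S j = 1 := by
  simp [S, Equiv.swap_mul_self]

lemma SS' (j : Fin n) (x : Equiv.Perm (Fin (n + 1))) : S j * (S j * x) = x := by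
  rw [← mul_assoc, SS, one_mul]

lemma exists_braid_word (w : Equiv.Perm (Fin (n + 1))) (h : Has321 w) :
    ∃ l : List (Fin n), IsReducedWordA n w l ∧ HasBraidFactor n l := by
  suffices H : ∀ (N : ℕ) (w : Equiv.Perm (Fin (n + 1))), invCount w ≤ N → Has321 w →
      ∃ l : List (Fin n), IsReducedWordA n w l ∧ HasBraidFactor n l by
    exact H (invCount w) w le_rfl h
  intro N
  induction N with
  | zero =>
    intro w hN h
    exfalso
    have h1 : w = 1 := eq_one_of_invCount_zero (by omega)
    obtain ⟨p, q, r, hpq, hqr, h1', h2'⟩ := h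
    rw [h1] at h1' h2'
    simp only [Equiv.Perm.one_apply] at h1' h2'
    exact absurd hpq (not_lt.2 h1'.le)
  | succ N ih =>
    intro w hN h
    by_cases hc : ∃ i : Fin n, w i.succ < w i.castSucc ∧ Has321 (w * S i)
    · obtain ⟨i, hdes, h321⟩ := hc
      have hstep := invCount_mul_of_descent hdes
      obtain ⟨l', hred', hbraid'⟩ := ih (w * S i) (by omega) h321
      obtain ⟨hp', hlen'⟩ := reduced_iff.1 hred'
      refine ⟨l' ++ [i], reduced_iff.2 ⟨?_, ?_⟩, ?_⟩
      · rw [wp_append, hp', wp_singleton, mul_assoc, SS, mul_one]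
      · simp only [List.length_append, List.length_singleton]
        omega
      · obtain ⟨u, v, a, b, hab, heq⟩ := hbraid'
        exact ⟨u, v ++ [i], a, b, hab, by rw [heq]; simp⟩
    · push_neg at hc
      obtain ⟨p, q, r, hpq, hqr, h1, h2⟩ := h
      obtain ⟨i₁, hq1, hr1, hd1⟩ := exists_descent_between w _ q r le_rfl hqr h2
      have hdisj1 : (p = i₁.castSucc ∧ q = i₁.succ) ∨ (q = i₁.castSucc ∧ r = i₁.succ) := by
        by_contra hcc
        rw [not_or] at hcc
        exact hc i₁ hd1 (pattern_mul hpq hqr h1 h2 hcc.1 hcc.2)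
      have hqr1 : q = i₁.castSucc ∧ r = i₁.succ := by
        rcases hdisj1 with ⟨_, hq'⟩ | hgood
        · exfalso
          have hx := Fin.castSucc_lt_succ (i := i₁)
          rw [← hq'] at hx
          exact absurd hq1 (not_le.2 hx)
        · exact hgood
      obtain ⟨hqe, hre⟩ := hqr1
      obtain ⟨i₂, hp2, hq2, hd2⟩ := exists_descent_between w _ p q le_rfl hpq h1
      have hdisj2 : (p = i₂.castSucc ∧ q = i₂.succ) ∨ (q = i₂.castSucc ∧ r = i₂.succ) := by
        by_contra hcc
        rw [not_or] at hcc
        exact hc i₂ hd2 (pattern_mul hpq hqr h1 h2 hcc.1 hcc.2)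
      have hpq2 : p = i₂.castSucc ∧ q = i₂.succ := by
        rcases hdisj2 with hgood | ⟨hq', _⟩
        · exact hgood
        · exfalso
          have hx := Fin.castSucc_lt_succ (i := i₂)
          rw [← hq'] at hx
          exact absurd hq2 (not_le.2 hx)
      obtain ⟨hpe, hqe2⟩ := hpq2
      -- swap evaluations
      have e1 : S i₂ q = p := by rw [S, hpe, hqe2]; exact Equiv.swap_apply_right _ _
      have e2 : S i₂ p = q := by rw [S, hpe, hqe2]; exact Equiv.swap_apply_left _ _
      have e3 : S i₂ r = r := by
        rw [S]
        exact Equiv.swap_apply_of_ne_of_ne (by rw [← hpe]; exact (hpq.trans hqr).ne')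
          (by rw [← hqe2]; exact hqr.ne')
      have e4 : S i₁ q = r := by rw [S, hqe, hre]; exact Equiv.swap_apply_left _ _
      have e6 : S i₁ p = p := by
        rw [S]
        exact Equiv.swap_apply_of_ne_of_ne (by rw [← hqe]; exact hpq.ne)
          (by rw [← hre]; exact (hpq.trans hqr).ne)
      -- three descents
      have d1 : w i₂.succ < w i₂.castSucc := by rw [← hpe, ← hqe2]; exact h1
      have step1 := invCount_mul_of_descent d1
      have d2 : (w * S i₂) i₁.succ < (w * S i₂) i₁.castSucc := by
        rw [← hre, ← hqe]
        simp only [Equiv.Perm.mul_apply]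
        rw [e3, e1]
        exact h2.trans h1
      have step2 := invCount_mul_of_descent d2
      have d3 : (w * S i₂ * S i₁) i₂.succ < (w * S i₂ * S i₁) i₂.castSucc := by
        rw [← hqe2, ← hpe]
        simp only [Equiv.Perm.mul_apply]
        rw [e4, e6, e3, e2]
        exact h2
      have step3 := invCount_mul_of_descent d3
      obtain ⟨l₀, hl0, hlen0⟩ := exists_word (n := n) (w * S i₂ * S i₁ * S i₂)
      refine ⟨l₀ ++ [i₂, i₁, i₂], reduced_iff.2 ⟨?_, ?_⟩, ?_⟩
      · rw [wp_append, hl0]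
        have hw3 : wordProdA n [i₂, i₁, i₂] = S i₂ * (S i₁ * S i₂) := by
          simp [wordProdA, S, mul_assoc]
        rw [hw3]
        simp only [mul_assoc, SS', SS, mul_one]
      · simp only [List.length_append]
        simp only [List.length_cons, List.length_nil]
        omega
      · exact ⟨l₀, [], i₂, i₁, Or.inl (by
          have hv1 := congrArg Fin.val hqe
          have hv2 := congrArg Fin.val hqe2
          simp only [Fin.coe_castSucc, Fin.val_succ] at hv1 hv2
          omega), by simp⟩

lemma has321_of_reduced_braid {w : Equiv.Perm (Fin (n + 1))} {l : List (Fin n)}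
    (hr : IsReducedWordA n w l) (hb : HasBraidFactor n l) : Has321 w := by
  obtain ⟨l₁, l₂, a, b, hab, heq⟩ := hb
  set x := wordProdA n l₁ with hx
  have he1 : l = l₁ ++ a :: (b :: a :: l₂) := by rw [heq]; simp
  have he2 : l = (l₁ ++ [a]) ++ b :: (a :: l₂) := by rw [heq]; simp
  have he3 : l = (l₁ ++ [a, b]) ++ a :: l₂ := by rw [heq]; simp
  have asc1 := ascent_at hr he1
  have asc2 := ascent_at hr he2
  have asc3 := ascent_at hr he3
  rw [← hx] at asc1
  have hwp2 : wordProdA n (l₁ ++ [a]) = x * S a := by rw [wp_append, wp_singleton, hx]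
  have hwp3 : wordProdA n (l₁ ++ [a, b]) = x * S a * S b := by
    rw [wp_append, hx, show wordProdA n [a, b] = S a * S b by simp [wordProdA, S], mul_assoc]
  rw [hwp2] at asc2
  rw [hwp3] at asc3
  have hy : wordProdA n (l₁ ++ [a, b, a]) = x * S a * S b * S a := by
    rw [wp_append, hx, show wordProdA n [a, b, a] = S a * (S b * S a) by
      simp [wordProdA, S, mul_assoc]]
    simp [mul_assoc]
  have saA : S a a.castSucc = a.succ := by rw [S]; exact Equiv.swap_apply_left _ _
  have saB : S a a.succ = a.castSucc := by rw [S]; exact Equiv.swap_apply_right _ _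
  have sbA : S b b.castSucc = b.succ := by rw [S]; exact Equiv.swap_apply_left _ _
  have sbB : S b b.succ = b.castSucc := by rw [S]; exact Equiv.swap_apply_right _ _
  have hHas : Has321 (x * S a * S b * S a) := by
    simp only [Equiv.Perm.mul_apply] at asc2 asc3
    rcases hab with hb1 | ha1
    · -- b = a + 1
      have bcs : b.castSucc = a.succ := by
        apply Fin.ext
        simp only [Fin.coe_castSucc, Fin.val_succ]
        omega
      have saC : S a b.succ = b.succ := by
        rw [S]
        refine Equiv.swap_apply_of_ne_of_ne ?_ ?_ <;>
          · simp only [Ne, Fin.ext_iff, Fin.coe_castSucc, Fin.val_succ]; omega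
      have sbAc : S b a.castSucc = a.castSucc := by
        rw [S]
        refine Equiv.swap_apply_of_ne_of_ne ?_ ?_ <;>
          · simp only [Ne, Fin.ext_iff, Fin.coe_castSucc, Fin.val_succ]; omega
      have sbB' : S b a.succ = b.succ := by rw [← bcs]; exact sbA
      have sbC : S b b.succ = a.succ := by rw [sbB, bcs]
      rw [bcs, saB, saC] at asc2
      rw [sbAc, saA, sbB', saC] at asc3
      refine ⟨a.castSucc, a.succ, b.succ, Fin.castSucc_lt_succ (i := a), ?_, ?_, ?_⟩
      · simp only [Fin.lt_def, Fin.val_succ]; omega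
      · simp only [Equiv.Perm.mul_apply]
        rw [saB, sbAc, saA, sbB', saC]
        exact asc3
      · simp only [Equiv.Perm.mul_apply]
        rw [saC, sbC, saB, sbAc, saA]
        exact asc1
    · -- a = b + 1
      have acs : a.castSucc = b.succ := by
        apply Fin.ext
        simp only [Fin.coe_castSucc, Fin.val_succ]
        omega
      have saAc : S a b.castSucc = b.castSucc := by
        rw [S]
        refine Equiv.swap_apply_of_ne_of_ne ?_ ?_ <;>
          · simp only [Ne, Fin.ext_iff, Fin.coe_castSucc, Fin.val_succ]; omega
      have sbC : S b a.succ = a.succ := by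
        rw [S]
        refine Equiv.swap_apply_of_ne_of_ne ?_ ?_ <;>
          · simp only [Ne, Fin.ext_iff, Fin.coe_castSucc, Fin.val_succ]; omega
      have sbBs : S b b.succ = b.castSucc := sbB
      rw [saAc, show S a b.succ = a.succ by rw [← acs, saA]] at asc2
      rw [show S b a.castSucc = b.castSucc by rw [acs, sbBs], saAc, sbC, saB, acs] at asc3
      rw [acs] at asc1
      refine ⟨b.castSucc, b.succ, a.succ, Fin.castSucc_lt_succ (i := b), ?_, ?_, ?_⟩
      · simp only [Fin.lt_def, Fin.val_succ]; omega
      · simp only [Equiv.Perm.mul_apply]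
        rw [show S a b.succ = a.succ by rw [← acs, saA], sbC, saB, acs, saAc, sbA,
          show S a b.succ = a.succ by rw [← acs, saA]]
        exact asc1
      · simp only [Equiv.Perm.mul_apply]
        rw [saB, acs, sbBs, saAc, show S a b.succ = a.succ by rw [← acs, saA], sbC, saB, acs]
        exact asc3
  rw [← hy] at hHas
  have he4 : l = (l₁ ++ [a, b, a]) ++ l₂ := by rw [heq]
  have hsplit := reduced_split hr he4
  have hweq : w = wordProdA n (l₁ ++ [a, b, a]) * wordProdA n l₂ := by
    rw [← (reduced_iff.1 hr).1, he4, wp_append]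
  have hprop := propagate l₂ (wordProdA n (l₁ ++ [a, b, a]))
    (by rw [← hweq, hsplit.2]) hHas
  rw [← hweq] at hprop
  exact hprop

end FC321

/-- A permutation `w` of `{1,…,n+1}` is fully commutative (no reduced word contains a
factor `sᵢ sᵢ₊₁ sᵢ` or `sᵢ₊₁ sᵢ sᵢ₊₁`) if and only if it is 321-avoiding (there are no
`a < b < c` with `w(a) > w(b) > w(c)`). -/
theorem fully_commutative_iff_321_avoiding (n : ℕ) (w : Equiv.Perm (Fin (n + 1))) :
    (∀ l : List (Fin n), IsReducedWordA n w l → ¬ HasBraidFactor n l) ↔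
      ∀ a b c : Fin (n + 1), a < b → b < c → w b < w a → ¬ w c < w b := by
  constructor
  · intro hFC a b c hab hbc h1 h2
    obtain ⟨l, hred, hbraid⟩ := FC321.exists_braid_word w ⟨a, b, c, hab, hbc, h1, h2⟩
    exact hFC l hred hbraid
  · intro hAvoid l hred hbraid
    obtain ⟨p, q, r, hpq, hqr, h1, h2⟩ := FC321.has321_of_reduced_braid hred hbraid
    exact hAvoid p q r hpq hqr h1 h2
end
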